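/- For all real x with 0 < x < π/2, 2 + (8/45)·x^4 + (16/315)·x^5·tan x < (sin x/x)^2 + (tan x)/x < 2 + (8/45)·x^4 + (2/π)^6·x^5·tan x. -/

import Mathlib

/-!
Multiplied by `x ^ 2 * cos x`, and with `sin x ^ 2 * cos x = (cos x - cos (3 * x)) / 4`,
each inequality says that a combination of `cos x`, `cos (3 * x)` and `sin x` with
polynomial coefficients has a sign. The alternating Taylor bounds for `sin` and `cos` on
`[0, ∞)`, obtained by integrating `cos ≤ 1` repeatedly, reduce this to a polynomial
inequality. That settles the lower bound on all of `(0, π / 2)`, and the upper bound on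
`(0, 7 / 5]`, where `(2 / π) ^ 6` may even be replaced by `33 / 500`.

Near `π / 2` the upper bound is sharp and Taylor bounds cannot work. There
`tan x < 1 / (π / 2 - x)` gives, with `t = 2 * x / π`,
`x * tan x * (1 - t ^ 6) < t + t ^ 2 + ⋯ + t ^ 6`, and what is left is a polynomial
inequality in `t ∈ [8 / 9, 1)`.
-/

open Real Finset Nat Set

noncomputable def sinTaylor (n : ℕ) (x : ℝ) : ℝ :=
  ∑ k ∈ range n, (-1) ^ k * x ^ (2 * k + 1) / (2 * k + 1)!

noncomputable def cosTaylor (n : ℕ) (x : ℝ) : ℝ :=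
  ∑ k ∈ range n, (-1) ^ k * x ^ (2 * k) / (2 * k)!

theorem hasDerivAt_sinTaylor (n : ℕ) (x : ℝ) : HasDerivAt (sinTaylor n) (cosTaylor n x) x := by
  refine HasDerivAt.fun_sum fun k _ ↦
    (((hasDerivAt_pow (2 * k + 1) x).const_mul _).div_const _).congr_deriv ?_
  rw [factorial_succ]
  push_cast
  field_simp

theorem hasDerivAt_cosTaylor (n : ℕ) (x : ℝ) :
    HasDerivAt (cosTaylor (n + 1)) (-sinTaylor n x) x := by
  have hcos : cosTaylor (n + 1) =
      fun y ↦ ∑ k ∈ range n, (-1 : ℝ) ^ (k + 1) * y ^ (2 * k + 2) / (2 * k + 2)! + 1 := by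
    funext y
    simp [cosTaylor, sum_range_succ', mul_add]
  rw [hcos, sinTaylor, ← sum_neg_distrib]
  refine (HasDerivAt.fun_sum fun k _ ↦
    (((hasDerivAt_pow (2 * k + 2) x).const_mul _).div_const _).congr_deriv ?_).add_const 1
  rw [factorial_succ (2 * k + 1)]
  push_cast
  field_simp
  ring

theorem le_of_hasDerivAt_nonneg {f f' : ℝ → ℝ} (hf : ∀ y, HasDerivAt f (f' y) y)
    (hf' : ∀ y, 0 ≤ y → 0 ≤ f' y) {x : ℝ} (hx : 0 ≤ x) : f 0 ≤ f x :=
  monotoneOn_of_hasDerivWithinAt_nonneg (convex_Ici 0)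
    (fun y _ ↦ (hf y).continuousAt.continuousWithinAt)
    (fun y _ ↦ (hf y).hasDerivWithinAt)
    (fun y hy ↦ hf' y (interior_subset hy)) self_mem_Ici hx hx

theorem sinTaylor_sub_sin_alternating {n : ℕ}
    (hcos : ∀ y, 0 ≤ y → 0 ≤ (-1) ^ n * (cosTaylor (n + 1) y - cos y)) {x : ℝ} (hx : 0 ≤ x) :
    0 ≤ (-1) ^ n * (sinTaylor (n + 1) x - sin x) := by
  have := le_of_hasDerivAt_nonneg
    (fun y ↦ ((hasDerivAt_sinTaylor (n + 1) y).sub (hasDerivAt_sin y)).const_mul ((-1) ^ n))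
    hcos hx
  simpa [sinTaylor] using this

theorem cosTaylor_sub_cos_alternating {n : ℕ}
    (hsin : ∀ y, 0 ≤ y → 0 ≤ (-1) ^ n * (sinTaylor (n + 1) y - sin y)) {x : ℝ} (hx : 0 ≤ x) :
    0 ≤ (-1) ^ (n + 1) * (cosTaylor (n + 2) x - cos x) := by
  have := le_of_hasDerivAt_nonneg
    (fun y ↦ ((hasDerivAt_cosTaylor (n + 1) y).sub (hasDerivAt_cos y)).const_mul ((-1) ^ (n + 1)))
    (fun y hy ↦ by convert hsin y hy using 1; ring) hx
  simpa [cosTaylor, sum_range_succ'] using this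

theorem cosTaylor_sinTaylor_alternating (n : ℕ) {x : ℝ} (hx : 0 ≤ x) :
    0 ≤ (-1) ^ n * (cosTaylor (n + 1) x - cos x) ∧
      0 ≤ (-1) ^ n * (sinTaylor (n + 1) x - sin x) := by
  suffices hcos : ∀ y, 0 ≤ y → 0 ≤ (-1) ^ n * (cosTaylor (n + 1) y - cos y) from
    ⟨hcos x hx, sinTaylor_sub_sin_alternating hcos hx⟩
  induction n with
  | zero => simp [cosTaylor, cos_le_one]
  | succ n ih =>
    exact fun _ ↦ cosTaylor_sub_cos_alternating fun _ ↦ sinTaylor_sub_sin_alternating ih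

theorem cos_le_cosTaylor (n : ℕ) {x : ℝ} (hx : 0 ≤ x) : cos x ≤ cosTaylor (2 * n + 1) x := by
  simpa [pow_mul] using (cosTaylor_sinTaylor_alternating (2 * n) hx).1

theorem cosTaylor_le_cos (n : ℕ) {x : ℝ} (hx : 0 ≤ x) : cosTaylor (2 * n + 2) x ≤ cos x := by
  simpa [pow_succ, pow_mul] using (cosTaylor_sinTaylor_alternating (2 * n + 1) hx).1

theorem sin_le_sinTaylor (n : ℕ) {x : ℝ} (hx : 0 ≤ x) : sin x ≤ sinTaylor (2 * n + 1) x := by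
  simpa [pow_mul] using (cosTaylor_sinTaylor_alternating (2 * n) hx).2

theorem sinTaylor_le_sin (n : ℕ) {x : ℝ} (hx : 0 ≤ x) : sinTaylor (2 * n + 2) x ≤ sin x := by
  simpa [pow_succ, pow_mul] using (cosTaylor_sinTaylor_alternating (2 * n + 1) hx).2

noncomputable def wilkerRemainder (c x : ℝ) : ℝ :=
  sin x ^ 2 + x * tan x - (2 * x ^ 2 + 8 / 45 * x ^ 6 + c * x ^ 7 * tan x)

theorem wilker_sub_eq_wilkerRemainder_div (c : ℝ) {x : ℝ} (hx : x ≠ 0) :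
    (sin x / x) ^ 2 + tan x / x - (2 + 8 / 45 * x ^ 4 + c * x ^ 5 * tan x) =
      wilkerRemainder c x / x ^ 2 := by
  unfold wilkerRemainder
  field_simp

theorem wilkerRemainder_mul_cos (c : ℝ) {x : ℝ} (hx : cos x ≠ 0) :
    wilkerRemainder c x * cos x = (cos x - cos (3 * x)) / 4 + x * sin x -
      (2 * x ^ 2 + 8 / 45 * x ^ 6) * cos x - c * x ^ 7 * sin x := by
  rw [wilkerRemainder, tan_eq_sin_div_cos, cos_three_mul, sin_sq]
  field_simp
  ring

theorem wilkerRemainder_pos {x : ℝ} (h0 : 0 < x) (hx : x < π / 2) :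
    0 < wilkerRemainder (16 / 315) x := by
  have hcos : 0 < cos x := cos_pos_of_mem_Ioo ⟨by linarith, hx⟩
  refine pos_of_mul_pos_left ?_ hcos.le
  rw [wilkerRemainder_mul_cos _ hcos.ne']
  -- what the Taylor bounds below leave after cancellation
  have hpoly : 0 < 9211 / 1814400 * x ^ 10 - 149161 / 212889600 * x ^ 12 := by
    have : x ^ 2 < 2.4675 := by nlinarith [pi_lt_d4]
    nlinarith [pow_pos h0 10]
  have c1 := cosTaylor_le_cos 2 h0.le
  have c2 := cos_le_cosTaylor 3 (by positivity : 0 ≤ 3 * x)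
  have c3 := cos_le_cosTaylor 2 h0.le
  have c4 := cos_le_cosTaylor 1 h0.le
  have s1 := sinTaylor_le_sin 1 h0.le
  have s2 := sin_le_sinTaylor 1 h0.le
  norm_num [cosTaylor, sinTaylor, sum_range_succ, factorial] at c1 c2 c3 c4 s1 s2
  linear_combination hpoly + c1 / 4 + c2 / 4 + x * s1 + 2 * x ^ 2 * c3 + 8 / 45 * x ^ 6 * c4
    + 16 / 315 * x ^ 7 * s2

theorem wilkerRemainder_neg_of_le {c x : ℝ} (h0 : 0 < x) (hx : x ≤ 7 / 5) (hc : 33 / 500 ≤ c) :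
    wilkerRemainder c x < 0 := by
  have hcos : 0 < cos x := cos_pos_of_mem_Ioo ⟨by linarith [pi_pos], by linarith [pi_gt_three]⟩
  have hsin : 0 < sin x := sin_pos_of_pos_of_lt_pi h0 (by linarith [pi_gt_three])
  refine neg_of_mul_neg_left ?_ hcos.le
  rw [wilkerRemainder_mul_cos _ hcos.ne']
  -- what the Taylor bounds below leave after cancellation
  have hpoly : -479 / 31500 * x ^ 8 + 1439 / 189000 * x ^ 10 - 2070209 / 6842880000 * x ^ 12
      + 11 / 840000 * x ^ 14 < 0 := by
    have : x ^ 2 ≤ 49 / 25 := by nlinarith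
    nlinarith [pow_pos h0 8, pow_pos h0 12]
  have c1 := cosTaylor_le_cos 2 h0.le
  have c2 := cosTaylor_le_cos 2 (by positivity : 0 ≤ 3 * x)
  have c3 := cos_le_cosTaylor 3 h0.le
  have c4 := cosTaylor_le_cos 1 h0.le
  have s1 := sin_le_sinTaylor 2 h0.le
  have s2 := sinTaylor_le_sin 1 h0.le
  norm_num [cosTaylor, sinTaylor, sum_range_succ, factorial] at c1 c2 c3 c4 s1 s2
  linear_combination hpoly + c3 / 4 + c2 / 4 + x * s1 + 2 * x ^ 2 * c1 + 8 / 45 * x ^ 6 * c4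
    + 33 / 500 * x ^ 7 * s2 + x ^ 7 * sin x * hc

theorem tan_lt_inv_pi_div_two_sub {x : ℝ} (h0 : 0 < x) (hx : x < π / 2) :
    tan x < (π / 2 - x)⁻¹ := by
  have h := lt_tan (sub_pos.2 hx) (by linarith)
  rwa [tan_pi_div_two_sub, lt_inv_comm₀ (sub_pos.2 hx) (tan_pos_of_pos_of_lt_pi_div_two h0 hx)]
    at h

theorem wilkerRemainder_neg_of_ge {x : ℝ} (h : 7 / 5 ≤ x) (hx : x < π / 2) :
    wilkerRemainder ((2 / π) ^ 6) x < 0 := by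
  obtain ⟨t, ht⟩ : ∃ t, t = 2 * x / π := ⟨_, rfl⟩
  have hxt : x = π / 2 * t := by rw [ht]; field_simp
  have ht0 : 8 / 9 ≤ t := by rw [ht, le_div_iff₀ pi_pos]; linarith [pi_lt_d2]
  have ht1 : t < 1 := by rw [ht, div_lt_one pi_pos]; linarith
  have hpos : 0 ≤ t := by linarith
  have hgeom : x * tan x * (1 - t ^ 6) < t + t ^ 2 + t ^ 3 + t ^ 4 + t ^ 5 + t ^ 6 := by
    have : 0 < 1 - t ^ 6 := sub_pos.2 (pow_lt_one₀ hpos ht1 (by norm_num))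
    calc x * tan x * (1 - t ^ 6) < x * (π / 2 - x)⁻¹ * (1 - t ^ 6) := by
          gcongr
          exact tan_lt_inv_pi_div_two_sub (by linarith) hx
      _ = t + t ^ 2 + t ^ 3 + t ^ 4 + t ^ 5 + t ^ 6 := by
          have : π / 2 - x = π / 2 * (1 - t) := by rw [hxt]; ring
          rw [this, hxt]
          field_simp [pi_pos.ne', (sub_pos.2 ht1).ne']
          ring
  have hpoly : t + t ^ 2 + t ^ 3 + t ^ 4 + t ^ 5 + t ^ 6 ≤
      493 / 100 * t ^ 2 + 266 / 100 * t ^ 6 - 1 := by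
    have hs : 0 ≤ t - 8 / 9 := by linarith
    nlinarith [mul_nonneg hs (pow_nonneg hpos 2), mul_nonneg hs (pow_nonneg hpos 3),
      mul_nonneg hs (pow_nonneg hpos 4), mul_nonneg hs (pow_nonneg hpos 5)]
  have hsq : 493 / 100 * t ^ 2 ≤ 2 * x ^ 2 := by
    have : 9.86 ≤ π ^ 2 := by nlinarith [pi_gt_d4]
    rw [hxt]; nlinarith [sq_nonneg t]
  have hsix : 266 / 100 * t ^ 6 ≤ 8 / 45 * x ^ 6 := by
    have : (3.14 / 2) ^ 6 ≤ (π / 2) ^ 6 := by gcongr; linarith [pi_gt_d2]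
    rw [hxt, mul_pow]; nlinarith [pow_nonneg hpos 6]
  have hcoef : (2 / π) ^ 6 * x ^ 7 * tan x = x * tan x * t ^ 6 := by rw [ht]; ring
  rw [wilkerRemainder, hcoef]
  linarith [sin_sq_le_one x]

theorem two_div_pi_pow_six_gt : 33 / 500 < (2 / π) ^ 6 := by
  have := pow_lt_pow_left₀ pi_lt_d4 pi_pos.le (by norm_num : 6 ≠ 0)
  rw [div_pow, lt_div_iff₀ (by positivity)]
  norm_num at this ⊢
  linarith

theorem stmt_8 (x : ℝ) (h1 : 0 < x) (h2 : x < π / 2) :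
    2 + (8 / 45) * x ^ 4 + (16 / 315) * x ^ 5 * tan x < (sin x / x) ^ 2 + tan x / x ∧
      (sin x / x) ^ 2 + tan x / x < 2 + (8 / 45) * x ^ 4 + (2 / π) ^ 6 * x ^ 5 * tan x := by
  have hx2 : 0 < x ^ 2 := by positivity
  constructor
  · rw [← sub_pos, wilker_sub_eq_wilkerRemainder_div _ h1.ne']
    exact div_pos (wilkerRemainder_pos h1 h2) hx2
  · rw [← sub_neg, wilker_sub_eq_wilkerRemainder_div _ h1.ne']
    refine div_neg_of_neg_of_pos ?_ hx2
    rcases le_or_gt x (7 / 5) with hle | hgt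
    · exact wilkerRemainder_neg_of_le h1 hle two_div_pi_pow_six_gt.le
    · exact wilkerRemainder_neg_of_ge hgt.le h2
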